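/- Let a₁,…,a_n be independent square-integrable random vectors in ℝ^d on a probability space, and let C be a random subset of {1,…,n} of cardinality c, uniformly distributed over all c-element subsets and independent of (a₁,…,a_n). If ‖E[a_i]‖ ≤ a for all i = 1,…,n (for some real a ≥ 0), then E[ ‖Σ_{i∈C} a_i‖² ] ≤ (c/n) Σ_{i=1}^n E[ ‖a_i − E[a_i]‖² ] + c²a². -/

import Mathlib

open MeasureTheory ProbabilityTheory
open scoped ENNReal RealInnerProductSpace

/-- Finsets of a type carry the discrete σ-algebra. -/
instance finsetMeasurableSpace {α : Type*} : MeasurableSpace (Finset α) := ⊤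

lemma aux_count (n c : ℕ) (hc : 0 < c) (i : Fin n) :
    (Finset.univ.filter (fun s : Finset (Fin n) => s.card = c ∧ i ∈ s)).card
      = (n-1).choose (c-1) := by
  have hcard : ((Finset.univ : Finset (Fin n)).erase i).card = n - 1 := by
    rw [Finset.card_erase_of_mem (Finset.mem_univ i), Finset.card_univ, Fintype.card_fin]
  rw [show (n-1).choose (c-1)
      = (Finset.powersetCard (c-1) ((Finset.univ : Finset (Fin n)).erase i)).card from by
    rw [Finset.card_powersetCard, hcard]]
  apply Finset.card_bij' (fun s _ => s.erase i) (fun t _ => insert i t)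
  · intro s hs
    simp only [Finset.mem_filter, Finset.mem_univ, true_and] at hs
    exact Finset.insert_erase hs.2
  · intro t ht
    rw [Finset.mem_powersetCard] at ht
    have hit : i ∉ t := fun h => (Finset.mem_erase.mp (ht.1 h)).1 rfl
    exact Finset.erase_insert hit
  · intro s hs
    simp only [Finset.mem_filter, Finset.mem_univ, true_and] at hs
    rw [Finset.mem_powersetCard]
    constructor
    · intro x hx
      rw [Finset.mem_erase] at hx ⊢
      exact ⟨hx.1, Finset.mem_univ x⟩
    · rw [Finset.card_erase_of_mem hs.2, hs.1]
  · intro t ht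
    rw [Finset.mem_powersetCard] at ht
    have hit : i ∉ t := fun h => (Finset.mem_erase.mp (ht.1 h)).1 rfl
    simp only [Finset.mem_filter, Finset.mem_univ, true_and]
    refine ⟨?_, Finset.mem_insert_self i t⟩
    rw [Finset.card_insert_of_notMem hit, ht.2]
    omega

lemma aux_count2 (n c : ℕ) (hn : 0 < n) (hc : 0 < c) (hcn : c ≤ n) (i : Fin n) :
    ((Finset.univ.filter (fun s : Finset (Fin n) => s.card = c ∧ i ∈ s)).card : ℝ)
      / (n.choose c : ℝ) = (c : ℝ) / n := by
  rw [aux_count n c hc i]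
  have key : n * (n-1).choose (c-1) = n.choose c * c := by
    have := Nat.add_one_mul_choose_eq (n-1) (c-1)
    have h1 : n - 1 + 1 = n := Nat.succ_pred_eq_of_pos hn
    have h2 : c - 1 + 1 = c := Nat.succ_pred_eq_of_pos hc
    rw [h1, h2] at this
    exact this
  have hch : (0:ℝ) < n.choose c := by exact_mod_cast Nat.choose_pos hcn
  have hn' : (0:ℝ) < n := by exact_mod_cast hn
  field_simp
  have : (n:ℝ) * (n-1).choose (c-1) = (n.choose c : ℝ) * c := by exact_mod_cast key
  linarith [this]

lemma aux_prob {Ω : Type*} [MeasurableSpace Ω] (μ : Measure Ω) [IsProbabilityMeasure μ]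
    {n c : ℕ} (C : Ω → Finset (Fin n)) (hCmeas : Measurable C)
    (hCcard : ∀ᵐ ω ∂μ, (C ω).card = c)
    (hCunif : ∀ s : Finset (Fin n), s.card = c → μ (C ⁻¹' {s}) = 1 / (n.choose c))
    (hch : n.choose c ≠ 0)
    (pred : Finset (Fin n) → Prop) [DecidablePred pred] :
    ∫ ω, (if pred (C ω) then (1:ℝ) else 0) ∂μ
      = ((Finset.univ.filter (fun s => s.card = c ∧ pred s)).card : ℝ) / (n.choose c) := by
  have hnull : ∀ s : Finset (Fin n), s.card ≠ c → μ (C ⁻¹' {s}) = 0 := by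
    intro s hs
    refine measure_mono_null (fun ω hω => ?_) (ae_iff.mp hCcard)
    simp only [Set.mem_preimage, Set.mem_singleton_iff] at hω
    simp [hω, hs]
  have hset : C ⁻¹' {s | pred s}
      = ⋃ s ∈ (Finset.univ.filter (fun s : Finset (Fin n) => pred s)), C ⁻¹' {s} := by
    ext ω
    simp [Set.mem_preimage]
  have hmeasset : ∀ s : Finset (Fin n), MeasurableSet (C ⁻¹' {s}) :=
    fun s => hCmeas (by trivial)
  have hμ : μ (C ⁻¹' {s | pred s})
      = ((Finset.univ.filter (fun s : Finset (Fin n) => s.card = c ∧ pred s)).card : ℝ≥0∞)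
        * (1 / ((n.choose c : ℕ) : ℝ≥0∞)) := by
    rw [hset, measure_biUnion_finset ?_ (fun s _ => hmeasset s)]
    · rw [← Finset.sum_filter_add_sum_filter_not _ (fun s => s.card = c)]
      have h2 : ∀ s ∈ (Finset.univ.filter (fun s : Finset (Fin n) => pred s)).filter
          (fun s => ¬ s.card = c), μ (C ⁻¹' {s}) = 0 := by
        intro s hs
        simp only [Finset.mem_filter] at hs
        exact hnull s hs.2
      have h2' : ∀ s ∈ (Finset.univ.filter (fun s : Finset (Fin n) => pred s)).filter
          (fun s => s.card = c), μ (C ⁻¹' {s}) = 1 / ((n.choose c : ℕ) : ℝ≥0∞) := by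
        intro s hs
        simp only [Finset.mem_filter] at hs
        exact hCunif s hs.2
      rw [Finset.sum_congr rfl h2, Finset.sum_congr rfl h2',
        Finset.sum_const, Finset.sum_const]
      have h3 : (Finset.univ.filter (fun s : Finset (Fin n) => pred s)).filter
          (fun s => s.card = c)
          = Finset.univ.filter (fun s : Finset (Fin n) => s.card = c ∧ pred s) := by
        ext s; simp [and_comm]
      rw [h3]
      simp only [smul_zero, add_zero, nsmul_eq_mul]
    · intro s hs t ht hst
      refine Set.disjoint_left.mpr (fun ω h1 h2 => hst ?_)
      simp only [Set.mem_preimage, Set.mem_singleton_iff] at h1 h2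
      rw [← h1, ← h2]
  have hind : (fun ω => if pred (C ω) then (1:ℝ) else 0)
      = Set.indicator (C ⁻¹' {s | pred s}) (fun _ => (1:ℝ)) := by
    ext ω
    by_cases h : pred (C ω) <;> simp [Set.indicator_apply, Set.mem_preimage, h]
  rw [hind, integral_indicator_const _ (hCmeas (by trivial)), measureReal_def, hμ]
  have hchR : ((n.choose c : ℕ) : ℝ≥0∞) ≠ 0 := by exact_mod_cast hch
  rw [ENNReal.toReal_mul, ENNReal.toReal_div]
  simp [div_eq_mul_inv]

lemma aux_integrable_mul {Ω : Type*} [MeasurableSpace Ω] {μ : Measure Ω} {f g : Ω → ℝ}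
    (hf : MemLp f 2 μ) (hg : MemLp g 2 μ) : Integrable (fun ω => f ω * g ω) μ := by
  have h := hg.smul (φ := f) hf (r := 1) (hpqr := ⟨by simp [ENNReal.inv_two_add_inv_two]⟩)
  exact memLp_one_iff_integrable.mp h

lemma aux_integrable_inner {Ω E : Type*} [MeasurableSpace Ω] {μ : Measure Ω}
    [NormedAddCommGroup E] [InnerProductSpace ℝ E] {f g : Ω → E}
    (hf : MemLp f 2 μ) (hg : MemLp g 2 μ) : Integrable (fun ω => ⟪f ω, g ω⟫) μ := by
  refine (aux_integrable_mul hf.norm hg.norm).mono' (hf.1.inner hg.1)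
    (Filter.Eventually.of_forall fun ω => ?_)
  simpa [Real.norm_eq_abs] using abs_real_inner_le_norm (f ω) (g ω)

/-- For independent square-integrable random vectors `a₁, …, aₙ` in `ℝ^d` with `‖E aᵢ‖ ≤ a`,
and a uniformly random `c`-element subset `C` of `{1,…,n}` independent of them,
`E‖Σ_{i∈C} aᵢ‖² ≤ (c/n) Σᵢ E‖aᵢ − E aᵢ‖² + c²a²`. -/
theorem stmt_8 (n c d : ℕ) (hn : 0 < n) (hc : 0 < c) (hd : 0 < d) (hcn : c ≤ n)
    {Ω : Type*} [MeasurableSpace Ω] (μ : Measure Ω) [IsProbabilityMeasure μ]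
    (a : Fin n → Ω → EuclideanSpace ℝ (Fin d))
    (haL2 : ∀ i, MemLp (a i) 2 μ)
    (hindep : iIndepFun a μ)
    (C : Ω → Finset (Fin n))
    (hCmeas : Measurable C)
    (hCcard : ∀ᵐ ω ∂μ, (C ω).card = c)
    (hCunif : ∀ s : Finset (Fin n), s.card = c → μ (C ⁻¹' {s}) = 1 / (n.choose c))
    (hCindep : IndepFun (fun ω i => a i ω) C μ)
    (A : ℝ) (hA : 0 ≤ A)
    (hmean : ∀ i, ‖∫ ω, a i ω ∂μ‖ ≤ A) :
    ∫ ω, ‖∑ i ∈ C ω, a i ω‖ ^ 2 ∂μ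
      ≤ (c / n : ℝ) * ∑ i, ∫ ω, ‖a i ω - ∫ ω', a i ω' ∂μ‖ ^ 2 ∂μ + c ^ 2 * A ^ 2 := by
  classical
  have hch : n.choose c ≠ 0 := (Nat.choose_pos hcn).ne'
  set m : Fin n → EuclideanSpace ℝ (Fin d) := fun i => ∫ ω', a i ω' ∂μ with hm_def
  set I : Fin n → Ω → ℝ := fun i ω => if i ∈ C ω then 1 else 0 with hI_def
  set V : Fin n → ℝ := fun i => ∫ ω, ‖a i ω - m i‖ ^ 2 ∂μ with hV_def
  set p : Fin n → Fin n → ℝ := fun i j => ∫ ω, I i ω * I j ω ∂μ with hp_def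
  -- basic facts
  have haInt : ∀ i, Integrable (a i) μ := fun i => (haL2 i).integrable one_le_two
  have hImeas : ∀ i, Measurable (I i) := by
    intro i
    have : I i = (fun s : Finset (Fin n) => if i ∈ s then (1:ℝ) else 0) ∘ C := rfl
    rw [this]
    exact measurable_from_top.comp hCmeas
  have hInonneg : ∀ i ω, 0 ≤ I i ω := by
    intro i ω; simp only [hI_def]; split <;> norm_num
  have hIbdd : ∀ i ω, I i ω ≤ 1 := by
    intro i ω; simp only [hI_def]; split <;> norm_num
  have hII_int : ∀ i j, Integrable (fun ω => I i ω * I j ω) μ := by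
    intro i j
    refine (integrable_const (1:ℝ)).mono'
      (((hImeas i).mul (hImeas j)).aestronglyMeasurable)
      (Filter.Eventually.of_forall fun ω => ?_)
    rw [Real.norm_eq_abs, abs_mul, abs_of_nonneg (hInonneg i ω), abs_of_nonneg (hInonneg j ω)]
    exact mul_le_one₀ (hIbdd i ω) (hInonneg j ω) (hIbdd j ω)
  have hinner_int : ∀ i j, Integrable (fun ω => ⟪a i ω, a j ω⟫) μ := fun i j =>
    aux_integrable_inner (haL2 i) (haL2 j)
  have hg_int : ∀ i j, Integrable (fun ω => I i ω * I j ω * ⟪a i ω, a j ω⟫) μ := by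
    intro i j
    refine (hinner_int i j).bdd_mul (((hImeas i).mul (hImeas j)).aestronglyMeasurable) (c := 1) (Filter.Eventually.of_forall ?_)
    intro ω
    rw [Real.norm_eq_abs, abs_mul, abs_of_nonneg (hInonneg i ω), abs_of_nonneg (hInonneg j ω)]
    exact mul_le_one₀ (hIbdd i ω) (hInonneg j ω) (hIbdd j ω)
  -- step 1: pointwise expansion
  have hpt : ∀ ω, ‖∑ i ∈ C ω, a i ω‖ ^ 2
      = ∑ i : Fin n, ∑ j : Fin n, I i ω * I j ω * ⟪a i ω, a j ω⟫ := by
    intro ω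
    have hsum : ∑ i ∈ C ω, a i ω = ∑ i : Fin n, I i ω • a i ω := by
      rw [eq_comm]
      simp only [hI_def, ite_smul, one_smul, zero_smul]
      rw [Finset.sum_ite_mem, Finset.univ_inter]
    rw [hsum, ← real_inner_self_eq_norm_sq, sum_inner]
    refine Finset.sum_congr rfl fun i _ => ?_
    rw [inner_sum]
    refine Finset.sum_congr rfl fun j _ => ?_
    rw [real_inner_smul_left, real_inner_smul_right]
    ring
  -- step 2: split integral
  have hsplit : ∫ ω, ‖∑ i ∈ C ω, a i ω‖ ^ 2 ∂μ
      = ∑ i : Fin n, ∑ j : Fin n, ∫ ω, I i ω * I j ω * ⟪a i ω, a j ω⟫ ∂μ := by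
    rw [show (fun ω => ‖∑ i ∈ C ω, a i ω‖ ^ 2)
        = fun ω => ∑ i : Fin n, ∑ j : Fin n, I i ω * I j ω * ⟪a i ω, a j ω⟫ from funext hpt]
    rw [integral_finset_sum _ (fun i _ => integrable_finset_sum _ (fun j _ => hg_int i j))]
    exact Finset.sum_congr rfl fun i _ => integral_finset_sum _ (fun j _ => hg_int i j)
  -- step 3: independence factorization
  have hfact : ∀ i j, ∫ ω, I i ω * I j ω * ⟪a i ω, a j ω⟫ ∂μ
      = p i j * ∫ ω, ⟪a i ω, a j ω⟫ ∂μ := by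
    intro i j
    have hIndep : IndepFun (fun ω => I i ω * I j ω) (fun ω => ⟪a i ω, a j ω⟫) μ := by
      have h1 : Measurable (fun s : Finset (Fin n) =>
          (if i ∈ s then (1:ℝ) else 0) * (if j ∈ s then (1:ℝ) else 0)) := measurable_from_top
      have h2 : Measurable (fun v : Fin n → EuclideanSpace ℝ (Fin d) => ⟪v i, v j⟫) :=
        Measurable.inner (measurable_pi_apply i) (measurable_pi_apply j)
      exact hCindep.symm.comp h1 h2
    exact hIndep.integral_fun_mul_eq_mul_integral (hII_int i j).1 (hinner_int i j).1
  -- coordinates and means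
  have hcoord_meas : ∀ k : Fin d, Measurable (fun x : EuclideanSpace ℝ (Fin d) => x k) :=
    fun k => (EuclideanSpace.proj k : EuclideanSpace ℝ (Fin d) →L[ℝ] ℝ).measurable
  have hcoL2 : ∀ (i : Fin n) (k : Fin d), MemLp (fun ω => a i ω k) 2 μ := by
    intro i k
    have := (haL2 i).const_inner (𝕜 := ℝ) (EuclideanSpace.single k 1)
    simpa [EuclideanSpace.inner_single_left] using this
  have hcomean : ∀ (i : Fin n) (k : Fin d), ∫ ω, a i ω k ∂μ = m i k := fun i k =>
    (EuclideanSpace.proj k : EuclideanSpace ℝ (Fin d) →L[ℝ] ℝ).integral_comp_comm (haInt i)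
  -- step 4a: off-diagonal expectation
  have hoff : ∀ i j, i ≠ j → ∫ ω, ⟪a i ω, a j ω⟫ ∂μ = ⟪m i, m j⟫ := by
    intro i j hij
    have hexp : ∀ ω, ⟪a i ω, a j ω⟫ = ∑ k : Fin d, a i ω k * a j ω k := by
      intro ω
      simp [PiLp.inner_apply, RCLike.inner_apply, conj_trivial, mul_comm]
    rw [show (fun ω => ⟪a i ω, a j ω⟫) = fun ω => ∑ k : Fin d, a i ω k * a j ω k from
      funext hexp]
    rw [integral_finset_sum _ (fun k _ => aux_integrable_mul (hcoL2 i k) (hcoL2 j k))]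
    have hterm : ∀ k : Fin d, ∫ ω, a i ω k * a j ω k ∂μ = m i k * m j k := by
      intro k
      have hIndep2 : IndepFun (fun ω => a i ω k) (fun ω => a j ω k) μ :=
        (hindep.indepFun hij).comp (hcoord_meas k) (hcoord_meas k)
      have h4 := hIndep2.integral_fun_mul_eq_mul_integral ((hcoL2 i k).integrable one_le_two).1
        ((hcoL2 j k).integrable one_le_two).1
      rw [hcomean, hcomean] at h4
      exact h4
    rw [Finset.sum_congr rfl fun k _ => hterm k]
    simp [PiLp.inner_apply, RCLike.inner_apply, conj_trivial, mul_comm]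
  -- step 4b: diagonal expectation
  have hdiag : ∀ i, ∫ ω, ⟪a i ω, a i ω⟫ ∂μ = V i + ‖m i‖ ^ 2 := by
    intro i
    have h1 : ∀ ω, ⟪a i ω, a i ω⟫
        = ‖a i ω - m i‖ ^ 2 + (2 * ⟪a i ω - m i, m i⟫ + ‖m i‖ ^ 2) := by
      intro ω
      have h2 := norm_add_sq_real (a i ω - m i) (m i)
      rw [sub_add_cancel] at h2
      rw [real_inner_self_eq_norm_sq, h2]
      ring
    have hint1 : Integrable (fun ω => ‖a i ω - m i‖ ^ 2) μ :=
      (memLp_two_iff_integrable_sq_norm ((haL2 i).sub (memLp_const (m i))).1).mp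
        ((haL2 i).sub (memLp_const (m i)))
    have hint2 : Integrable (fun ω => ⟪a i ω - m i, m i⟫) μ :=
      ((haInt i).sub (integrable_const (m i))).inner_const (m i)
    have hsubint : Integrable (fun ω => a i ω - m i) μ := (haInt i).sub (integrable_const (m i))
    have hzero : ∫ ω, ⟪a i ω - m i, m i⟫ ∂μ = 0 := by
      have hflip : ∀ ω, ⟪a i ω - m i, m i⟫ = ⟪m i, a i ω - m i⟫ := fun ω =>
        real_inner_comm _ _
      rw [show (fun ω => ⟪a i ω - m i, m i⟫) = fun ω => ⟪m i, a i ω - m i⟫ from funext hflip]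
      rw [integral_inner (𝕜 := ℝ) hsubint (m i)]
      have h6 : ∫ ω, a i ω - m i ∂μ = 0 := by
        rw [integral_sub (haInt i) (integrable_const (m i)), integral_const]
        simp [hm_def]
      rw [h6, inner_zero_right]
    rw [show (fun ω => ⟪a i ω, a i ω⟫)
        = fun ω => ‖a i ω - m i‖ ^ 2 + (2 * ⟪a i ω - m i, m i⟫ + ‖m i‖ ^ 2) from funext h1]
    have hint3 : Integrable (fun ω => 2 * ⟪a i ω - m i, m i⟫) μ := hint2.const_mul 2
    have hint4 : Integrable (fun ω => 2 * ⟪a i ω - m i, m i⟫ + ‖m i‖ ^ 2) μ :=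
      hint3.add (integrable_const _)
    rw [integral_add hint1 hint4, integral_add hint3 (integrable_const _), integral_const_mul,
      hzero, integral_const]
    simp [hV_def]
  -- p values
  have hpii : ∀ i, p i i = (c : ℝ) / n := by
    intro i
    have h1 : (fun ω => I i ω * I i ω)
        = fun ω => if (fun s => i ∈ s) (C ω) then (1:ℝ) else 0 := by
      funext ω
      simp only [hI_def]
      split <;> norm_num
    rw [hp_def]
    simp only
    rw [h1, aux_prob μ C hCmeas hCcard hCunif hch (fun s => i ∈ s),
      aux_count2 n c hn hc hcn i]
  have hpnonneg : ∀ i j, 0 ≤ p i j := fun i j =>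
    integral_nonneg fun ω => mul_nonneg (hInonneg i ω) (hInonneg j ω)
  have hpsum : ∑ i : Fin n, ∑ j : Fin n, p i j = (c : ℝ) ^ 2 := by
    have h1 : ∀ ω, ∑ i : Fin n, ∑ j : Fin n, I i ω * I j ω = ((C ω).card : ℝ) ^ 2 := by
      intro ω
      have hI : ∑ i : Fin n, I i ω = ((C ω).card : ℝ) := by
        simp only [hI_def]
        rw [Finset.sum_boole]
        congr 1
        rw [Finset.filter_mem_eq_inter, Finset.univ_inter]
      rw [← Finset.sum_mul_sum, hI]
      ring
    have h2 : ∑ i : Fin n, ∑ j : Fin n, p i j = ∫ ω, ((C ω).card : ℝ) ^ 2 ∂μ := by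
      rw [show (fun ω => ((C ω).card : ℝ) ^ 2)
          = fun ω => ∑ i : Fin n, ∑ j : Fin n, I i ω * I j ω from funext fun ω => (h1 ω).symm]
      rw [integral_finset_sum _ (fun i _ => integrable_finset_sum _ (fun j _ => hII_int i j))]
      exact Finset.sum_congr rfl fun i _ => (integral_finset_sum _ fun j _ => hII_int i j).symm
    rw [h2]
    have h3 : (fun ω => ((C ω).card : ℝ) ^ 2) =ᵐ[μ] fun _ => (c : ℝ) ^ 2 := by
      filter_upwards [hCcard] with ω hω
      rw [hω]
    rw [integral_congr_ae h3, integral_const]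
    simp
  -- assemble
  have hterm : ∀ i j, p i j * (∫ ω, ⟪a i ω, a j ω⟫ ∂μ)
      = (if i = j then p i i * V i else 0) + p i j * ⟪m i, m j⟫ := by
    intro i j
    by_cases hij : i = j
    · subst hij
      rw [if_pos rfl, hdiag i, real_inner_self_eq_norm_sq]
      ring
    · rw [hoff i j hij, if_neg hij, zero_add]
  calc ∫ ω, ‖∑ i ∈ C ω, a i ω‖ ^ 2 ∂μ
      = ∑ i : Fin n, ∑ j : Fin n, ∫ ω, I i ω * I j ω * ⟪a i ω, a j ω⟫ ∂μ := hsplit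
    _ = ∑ i : Fin n, ∑ j : Fin n,
        ((if i = j then p i i * V i else 0) + p i j * ⟪m i, m j⟫) := by
        refine Finset.sum_congr rfl fun i _ => Finset.sum_congr rfl fun j _ => ?_
        rw [hfact i j, hterm i j]
    _ = ∑ i : Fin n, p i i * V i
        + ∑ i : Fin n, ∑ j : Fin n, p i j * ⟪m i, m j⟫ := by
        rw [← Finset.sum_add_distrib]
        refine Finset.sum_congr rfl fun i _ => ?_
        rw [Finset.sum_add_distrib]
        congr 1
        simp
    _ ≤ (c / n : ℝ) * ∑ i, V i + (c : ℝ) ^ 2 * A ^ 2 := by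
        have hle1 : ∑ i : Fin n, p i i * V i = (c / n : ℝ) * ∑ i, V i := by
          rw [Finset.mul_sum]
          exact Finset.sum_congr rfl fun i _ => by rw [hpii i]
        have hle2 : ∑ i : Fin n, ∑ j : Fin n, p i j * ⟪m i, m j⟫ ≤ (c : ℝ) ^ 2 * A ^ 2 := by
          have : ∀ i j, p i j * ⟪m i, m j⟫ ≤ p i j * A ^ 2 := by
            intro i j
            refine mul_le_mul_of_nonneg_left ?_ (hpnonneg i j)
            calc ⟪m i, m j⟫ ≤ ‖m i‖ * ‖m j‖ := real_inner_le_norm _ _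
              _ ≤ A * A := mul_le_mul (hmean i) (hmean j) (norm_nonneg _) hA
              _ = A ^ 2 := by ring
          calc ∑ i : Fin n, ∑ j : Fin n, p i j * ⟪m i, m j⟫
              ≤ ∑ i : Fin n, ∑ j : Fin n, p i j * A ^ 2 :=
                Finset.sum_le_sum fun i _ => Finset.sum_le_sum fun j _ => this i j
            _ = (∑ i : Fin n, ∑ j : Fin n, p i j) * A ^ 2 := by
                rw [Finset.sum_mul]
                exact Finset.sum_congr rfl fun i _ => by rw [Finset.sum_mul]
            _ = (c : ℝ) ^ 2 * A ^ 2 := by rw [hpsum]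
        rw [hle1]
        linarith [hle2]
    _ = (c / n : ℝ) * ∑ i, ∫ ω, ‖a i ω - ∫ ω', a i ω' ∂μ‖ ^ 2 ∂μ + c ^ 2 * A ^ 2 := by
        norm_num [hV_def, hm_def]
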